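/- arXiv:2105.01880 — 3 statements merged into one kernel-verified Lean document; each statement's English description precedes it below -/
import Mathlib

section
/- For all n ≥ 1, the harmonic numbers hₙ := H_{2n+1} = ∑_{j=1}^{2n+1} 1/j satisfy the recurrence (n+1)(2n+3)(4n+1) · h_{n+1} = (4n+3)(4n²+6n+1) · hₙ − n(2n+1)(4n+5) · h_{n−1}. -/
/-- The `m`-th harmonic number `H_m = ∑_{j=1}^m 1/j`. -/
def harmonicNum (m : ℕ) : ℚ := ∑ j ∈ Finset.range m, 1 / ((j : ℚ) + 1)

theorem harmonicNum_succ (k : ℕ) :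
    harmonicNum (k + 1) = harmonicNum k + 1 / ((k : ℚ) + 1) := by
  simp [harmonicNum, Finset.sum_range_succ]

theorem mul_harmonicNum_add_two_sub (k : ℕ) :
    ((k : ℚ) + 1) * ((k : ℚ) + 2) * (harmonicNum (k + 2) - harmonicNum k) = 2 * k + 3 := by
  rw [harmonicNum_succ, harmonicNum_succ]
  push_cast
  field_simp
  ring

/- The coefficients satisfy `(4n+3)(4n²+6n+1) = a + c` with `a = (n+1)(2n+3)(4n+1)` and
`c = n(2n+1)(4n+5)`, so the recurrence reads `a (h_{n+1} - h_n) = c (h_n - h_{n-1})`,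
and both sides equal `(4n+1)(4n+5)/2`. -/
theorem odd_harmonic_recurrence (n : ℕ) (hn : 1 ≤ n) :
    ((n : ℚ) + 1) * (2 * (n : ℚ) + 3) * (4 * (n : ℚ) + 1) * harmonicNum (2 * (n + 1) + 1)
      = (4 * (n : ℚ) + 3) * (4 * (n : ℚ) ^ 2 + 6 * (n : ℚ) + 1) * harmonicNum (2 * n + 1)
        - (n : ℚ) * (2 * (n : ℚ) + 1) * (4 * (n : ℚ) + 5) * harmonicNum (2 * (n - 1) + 1) := by
  obtain ⟨m, rfl⟩ : ∃ m, n = m + 1 := ⟨n - 1, by omega⟩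
  have hup := mul_harmonicNum_add_two_sub (2 * m + 3)
  have hdown := mul_harmonicNum_add_two_sub (2 * m + 1)
  rw [show 2 * (m + 1 + 1) + 1 = 2 * m + 3 + 2 by ring, show 2 * (m + 1) + 1 = 2 * m + 1 + 2 by ring,
    show 2 * (m + 1 - 1) + 1 = 2 * m + 1 by omega]
  push_cast at hup hdown ⊢
  linear_combination (4 * (m : ℚ) + 5) / 2 * hup - (4 * (m : ℚ) + 9) / 2 * hdown
end

section
/- Let M be an n×n matrix over a commutative ring with n even, and suppose M_{i,j} = 0 whenever i+j is even. Then det(M) = (−1)^{n/2} · det(M_{2i+1,2j})_{0≤i,j≤n/2−1} · det(M_{2i,2j+1})_{0≤i,j≤n/2−1}. -/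
/-!
Index `Fin n` by `Fin (n / 2) × Fin 2` through `k ↦ (k / 2, k % 2)`. The parity of `i + j` is then
the parity of the sum of the `Fin 2` coordinates, so the hypothesis says that the two diagonal
blocks of the reindexed matrix vanish. Swapping the two column blocks, a product of `n / 2`
disjoint transpositions, makes it block diagonal with blocks `(M_{2i,2j+1})` and `(M_{2i+1,2j})`.
-/

open Equiv

theorem Equiv.Perm.sign_prodCongrRight_swap {ι β : Type*} [Fintype ι] [DecidableEq ι]
    [Fintype β] [DecidableEq β] {a b : β} (hab : a ≠ b) :
    sign (prodCongrRight fun _ : ι => swap a b) = (-1) ^ Fintype.card ι := by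
  simp [sign_prodCongrRight, sign_swap hab]

namespace Matrix

variable {R ι : Type*} [CommRing R]

theorem submatrix_id_prodCongrRight_swap_eq_blockDiagonal
    (M : Matrix (ι × Fin 2) (ι × Fin 2) R) (hM : ∀ i j k, M (i, k) (j, k) = 0) :
    M.submatrix id (prodCongrRight fun _ => Equiv.swap 0 1)
      = blockDiagonal ![of fun i j => M (i, 0) (j, 1), of fun i j => M (i, 1) (j, 0)] := by
  ext ⟨i, k⟩ ⟨j, l⟩
  fin_cases k <;> fin_cases l <;> simp [blockDiagonal_apply, hM]

theorem det_eq_of_diagonal_blocks_eq_zero [Fintype ι] [DecidableEq ι]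
    (M : Matrix (ι × Fin 2) (ι × Fin 2) R) (hM : ∀ i j k, M (i, k) (j, k) = 0) :
    M.det = (-1) ^ Fintype.card ι * (of fun i j => M (i, 1) (j, 0)).det
      * (of fun i j => M (i, 0) (j, 1)).det := by
  have h := det_permute' (prodCongrRight fun _ => Equiv.swap 0 1) M
  rw [submatrix_id_prodCongrRight_swap_eq_blockDiagonal M hM, det_blockDiagonal,
    Fin.prod_univ_two, Perm.sign_prodCongrRight_swap (by decide)] at h
  push_cast at h
  have hsq : ((-1 : R) ^ Fintype.card ι) * (-1) ^ Fintype.card ι = 1 := by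
    rw [← mul_pow]; norm_num
  linear_combination (-(-1 : R) ^ Fintype.card ι) * h - M.det * hsq

end Matrix

def finProdFinTwoEquivOfEven {n : ℕ} (hn : Even n) : Fin (n / 2) × Fin 2 ≃ Fin n :=
  finProdFinEquiv.trans (finCongr (Nat.div_two_mul_two_of_even hn))

@[simp]
theorem finProdFinTwoEquivOfEven_apply_val {n : ℕ} (hn : Even n) (x : Fin (n / 2) × Fin 2) :
    (finProdFinTwoEquivOfEven hn x : ℕ) = 2 * x.1 + x.2 := by
  simp [finProdFinTwoEquivOfEven]; ring

theorem checkerboard_det_even_vanish_even_dim {R : Type*} [CommRing R] (n : ℕ)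
    (hn : Even n) (M : Matrix (Fin n) (Fin n) R)
    (hM : ∀ i j : Fin n, Even (i.1 + j.1) → M i j = 0) :
    M.det
      = (-1 : R) ^ (n / 2)
      * Matrix.det (Matrix.of fun i j : Fin (n / 2) =>
          M ⟨2 * i.1 + 1, by have := i.2; omega⟩ ⟨2 * j.1, by have := j.2; omega⟩)
      * Matrix.det (Matrix.of fun i j : Fin (n / 2) =>
          M ⟨2 * i.1, by have := i.2; omega⟩ ⟨2 * j.1 + 1, by have := j.2; omega⟩) := by
  set e := finProdFinTwoEquivOfEven hn
  have hMe : ∀ i j k, M.submatrix e e (i, k) (j, k) = 0 := fun i j k =>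
    hM _ _ ⟨i + j + k, by simp [e]; ring⟩
  rw [← Matrix.det_submatrix_equiv_self e, Matrix.det_eq_of_diagonal_blocks_eq_zero _ hMe,
    Fintype.card_fin]
  congr 3 <;> ext i j <;> simp only [Matrix.of_apply, Matrix.submatrix_apply] <;>
    congr 1 <;> ext <;> simp [e]
end

section
/- Let (cₖ) be a sequence in a commutative ring, x an element, and define cₖ(x) := ∑_{j=0}^k binom(k,j) · cⱼ · x^{k−j}. Then for all n ≥ 0, the Hankel determinants satisfy Hₙ(cₖ(x)) = Hₙ(cₖ). -/
/-!
Let `L` be the linear functional on `R[X]` with `L (X ^ k) = c k`. Then `cₖ(x) = L ((X + x) ^ k)`,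
so the Hankel matrix of `cₖ(x)` is the Gram matrix `(L (pᵢ * pⱼ))` of `pᵢ = (X + x) ^ i`.
If `P` is the coefficient matrix of the `pᵢ` and `H` the Hankel matrix of `c`, this Gram matrix is
`P * H * Pᵀ`, and `P` is unitriangular.
-/

/-- The Hankel determinant `Hₙ(c) = det (c_{i+j})_{0 ≤ i,j ≤ n}`. -/
def hankel {R : Type*} [CommRing R] (c : ℕ → R) (n : ℕ) : R :=
  Matrix.det (Matrix.of fun i j : Fin (n + 1) => c (i.1 + j.1))

open Polynomial Finset Matrix

section

variable {R : Type*} [CommRing R]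

def momentFunctional (c : ℕ → R) : R[X] →ₗ[R] R :=
  lsum fun k => LinearMap.mulRight R (c k)

lemma momentFunctional_monomial (c : ℕ → R) (k : ℕ) (a : R) :
    momentFunctional c (monomial k a) = a * c k := by
  simp [momentFunctional]

lemma momentFunctional_X_pow (c : ℕ → R) (k : ℕ) : momentFunctional c (X ^ k) = c k := by
  rw [← monomial_one_right_eq_X_pow, momentFunctional_monomial, one_mul]

lemma momentFunctional_X_add_C_pow (c : ℕ → R) (x : R) (k : ℕ) :
    momentFunctional c ((X + C x) ^ k)
      = ∑ j ∈ range (k + 1), (k.choose j : R) * c j * x ^ (k - j) := by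
  rw [add_pow, map_sum]
  refine sum_congr rfl fun j _ => ?_
  rw [← C_pow, ← C_eq_natCast, mul_assoc, ← C_mul, X_pow_mul_C, C_mul_X_pow_eq_monomial,
    momentFunctional_monomial]
  ring

lemma gram_eq_coeff_mul_moments_mul_transpose (L : R[X] →ₗ[R] R) {n : ℕ}
    (p : Fin (n + 1) → R[X]) (hp : ∀ i, (p i).natDegree ≤ n) :
    (of fun i j => L (p i * p j))
      = of (fun i k : Fin (n + 1) => (p i).coeff k)
        * (of fun k l : Fin (n + 1) => L (X ^ (k.1 + l.1)))
        * (of fun i k : Fin (n + 1) => (p i).coeff k)ᵀ := by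
  have hexpand : ∀ i, p i = ∑ k : Fin (n + 1), (p i).coeff k • X ^ k.1 := fun i => by
    simp only [smul_X_eq_monomial]
    rw [Fin.sum_univ_eq_sum_range (fun k => monomial k ((p i).coeff k))]
    exact as_sum_range' _ _ (Nat.lt_succ_of_le (hp i))
  ext i j
  rw [of_apply, hexpand i, hexpand j]
  simp only [sum_mul, mul_sum, map_sum, smul_mul_smul_comm, ← pow_add, map_smul, smul_eq_mul,
    mul_apply, of_apply, transpose_apply]
  exact sum_congr rfl fun _ _ => sum_congr rfl fun _ _ => by ring

lemma det_coeff_eq_one_of_unitriangular {n : ℕ} (p : Fin (n + 1) → R[X])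
    (hdeg : ∀ i, (p i).natDegree ≤ i) (hcoeff : ∀ i, (p i).coeff i = 1) :
    (of fun i k : Fin (n + 1) => (p i).coeff k).det = 1 := by
  rw [det_of_isLowerTriangular]
  · exact prod_eq_one fun i _ => hcoeff i
  · exact fun i k hik => coeff_eq_zero_of_natDegree_lt ((hdeg i).trans_lt hik)

lemma det_gram_eq_hankel (L : R[X] →ₗ[R] R) {n : ℕ} (p : Fin (n + 1) → R[X])
    (hdeg : ∀ i, (p i).natDegree ≤ i) (hcoeff : ∀ i, (p i).coeff i = 1) :
    (of fun i j => L (p i * p j)).det = hankel (fun k => L (X ^ k)) n := by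
  rw [gram_eq_coeff_mul_moments_mul_transpose L p fun i => (hdeg i).trans (Fin.is_le i),
    det_mul, det_mul, det_transpose, det_coeff_eq_one_of_unitriangular p hdeg hcoeff,
    one_mul, mul_one, hankel]

lemma natDegree_X_add_C_pow_le (x : R) (i : ℕ) : ((X + C x) ^ i).natDegree ≤ i :=
  natDegree_le_iff_coeff_eq_zero.mpr fun k hk => by
    rw [coeff_X_add_C_pow, Nat.choose_eq_zero_of_lt (by exact_mod_cast hk), Nat.cast_zero,
      mul_zero]

lemma coeff_X_add_C_pow_self (x : R) (i : ℕ) : ((X + C x) ^ i).coeff i = 1 := by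
  rw [coeff_X_add_C_pow, Nat.sub_self, pow_zero, Nat.choose_self, Nat.cast_one, one_mul]

lemma hankel_moments_X_add_C_pow (L : R[X] →ₗ[R] R) (x : R) (n : ℕ) :
    hankel (fun k => L ((X + C x) ^ k)) n = hankel (fun k => L (X ^ k)) n := by
  rw [← det_gram_eq_hankel L (fun i : Fin (n + 1) => (X + C x) ^ i.1)
    (fun i => natDegree_X_add_C_pow_le x i) fun i => coeff_X_add_C_pow_self x i]
  simp only [hankel, pow_add]

end

theorem hankel_binomial_transform {R : Type*} [CommRing R] (c : ℕ → R) (x : R) (n : ℕ) :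
    hankel (fun k => ∑ j ∈ Finset.range (k + 1), (k.choose j : R) * c j * x ^ (k - j)) n
      = hankel c n := by
  simpa only [momentFunctional_X_add_C_pow, momentFunctional_X_pow] using
    hankel_moments_X_add_C_pow (momentFunctional c) x n
end
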